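/- arXiv:2403.19693 — 2 statements merged into one kernel-verified Lean document; each statement's English description precedes it below -/
import Mathlib

section
/- The function h(x) = (sin(x) − x·cos(x))/(x − sin(x)) is strictly decreasing on (0, π/2). -/
/-!
The numerator of `h'` is `x² sin x - (x + sin x)(1 - cos x)`. With `t = x/2`, `s = sin t`,
`c = cos t` it equals `-4 s (t s + s² c - 2 t² c)`, so it suffices that `2 t² c < t s + s² c`.
As `s² < 2 t²`, the right side minus the left decreases in `c` and increases in `s`, so the bounds
`t - t³/6 ≤ s` and `c ≤ 1 - t²/2 + t⁴/24` reduce it to a polynomial inequality, whose gap is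
`t⁶ (11/72 - t²/36 + t⁴/864) > 0`.
-/

open Real

theorem Real.cos_le_one_sub_sq_div_two_add_pow_four_div (x : ℝ) :
    cos x ≤ 1 - x ^ 2 / 2 + x ^ 4 / 24 := by
  let f (t : ℝ) : ℝ := 1 - t ^ 2 / 2 + t ^ 4 / 24 - cos t
  have hderiv (t : ℝ) : deriv f t = sin t - (t - t ^ 3 / 6) := by
    simp (disch := fun_prop) [f]
    ring
  have hmono : MonotoneOn f (Set.Ici 0) := by
    apply monotoneOn_of_deriv_nonneg (convex_Ici 0) (by fun_prop) (by fun_prop)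
    intro t ht
    rw [interior_Ici] at ht
    linarith [hderiv t, sin_ge_sub_cube (le_of_lt ht)]
  have h := hmono Set.self_mem_Ici (abs_nonneg x) (abs_nonneg x)
  simpa [f, cos_abs, sq_abs, Even.pow_abs ⟨2, rfl⟩] using h

theorem Real.two_mul_sq_mul_cos_lt {t : ℝ} (h0 : 0 < t) (h1 : t ≤ 1) :
    2 * t ^ 2 * cos t < t * sin t + sin t ^ 2 * cos t := by
  have hp : 0 < t - t ^ 3 / 6 := by nlinarith [pow_le_one₀ h0.le h1 (n := 2)]
  have hpt : t - t ^ 3 / 6 ≤ t := by linarith [pow_pos h0 3]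
  have hp2 : (t - t ^ 3 / 6) ^ 2 ≤ 2 * t ^ 2 := by nlinarith
  set p := t - t ^ 3 / 6
  set r := 1 - t ^ 2 / 2 + t ^ 4 / 24
  have hps : p ≤ sin t := sin_ge_sub_cube h0.le
  have hcr : cos t ≤ r := cos_le_one_sub_sq_div_two_add_pow_four_div t
  have hc : 0 < cos t := by nlinarith [one_sub_sq_div_two_le_cos (x := t)]
  have hgap : 0 < t * p + p ^ 2 * r - 2 * t ^ 2 * r := by
    have hpoly : t * p + p ^ 2 * r - 2 * t ^ 2 * r
        = t ^ 6 * (11 / 72 - t ^ 2 / 36 + t ^ 4 / 864) := by ring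
    rw [hpoly]
    exact mul_pos (by positivity) (by nlinarith)
  nlinarith [mul_le_mul_of_nonneg_left hps h0.le,
    mul_le_mul_of_nonneg_left (pow_le_pow_left₀ hp.le hps 2) hc.le,
    mul_nonneg (sub_nonneg.2 hcr) (sub_nonneg.2 hp2)]

theorem Real.sq_mul_sin_lt_add_sin_mul_one_sub_cos {x : ℝ} (h0 : 0 < x) (h2 : x ≤ 2) :
    x ^ 2 * sin x < (x + sin x) * (1 - cos x) := by
  obtain ⟨t, rfl⟩ : ∃ t, x = 2 * t := ⟨x / 2, by ring⟩
  have hs : 0 < sin t := sin_pos_of_pos_of_lt_pi (by linarith) (by linarith [pi_gt_three])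
  have key := two_mul_sq_mul_cos_lt (t := t) (by linarith) (by linarith)
  have hcos : 1 - cos (2 * t) = 2 * sin t ^ 2 := by
    rw [cos_two_mul]
    linarith [sin_sq_add_cos_sq t]
  have hdiff : (2 * t + sin (2 * t)) * (1 - cos (2 * t)) - (2 * t) ^ 2 * sin (2 * t)
      = 4 * sin t * (t * sin t + sin t ^ 2 * cos t - 2 * t ^ 2 * cos t) := by
    rw [hcos, sin_two_mul]
    ring
  nlinarith [mul_pos hs (sub_pos.2 key)]

theorem Real.hasDerivAt_sin_sub_mul_cos (x : ℝ) :
    HasDerivAt (fun y => sin y - y * cos y) (x * sin x) x :=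
  ((hasDerivAt_sin x).fun_sub ((hasDerivAt_id' x).fun_mul (hasDerivAt_cos x))).congr_deriv
    (by ring)

theorem h_strict_anti :
    StrictAntiOn (fun x : ℝ => (Real.sin x - x * Real.cos x) / (x - Real.sin x))
      (Set.Ioo 0 (π/2)) := by
  have hden : ∀ x ∈ Set.Ioo 0 (π / 2), 0 < x - sin x := fun x hx => sub_pos.2 (sin_lt hx.1)
  apply strictAntiOn_of_deriv_neg (convex_Ioo 0 (π / 2))
  · exact ContinuousOn.div (by fun_prop) (by fun_prop) fun x hx => (hden x hx).ne'
  intro x hx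
  rw [interior_Ioo] at hx
  have hk : HasDerivAt (fun y => y - sin y) (1 - cos x) x :=
    (hasDerivAt_id' x).sub (hasDerivAt_sin x)
  rw [((hasDerivAt_sin_sub_mul_cos x).fun_div hk (hden x hx).ne').deriv]
  have hnum : x * sin x * (x - sin x) - (sin x - x * cos x) * (1 - cos x)
      = x ^ 2 * sin x - (x + sin x) * (1 - cos x) := by
    linear_combination (-x) * sin_sq_add_cos_sq x
  refine div_neg_of_neg_of_pos ?_ (pow_pos (hden x hx) 2)
  rw [hnum]
  linarith [sq_mul_sin_lt_add_sin_mul_one_sub_cos hx.1 (by linarith [hx.2, pi_le_four])]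
end

section
/- For all q in (0, 2/(π−2)] and all x in (0, π/2), it holds that sin(x)/x > 2/π + ((π − 2)/π^{q+1})(π^q − (2x)^q); moreover the constant 2/(π−2) is the largest q for which this lower bound holds on all of (0, π/2). -/
open Real Set



/-- If `f 0 = 0` and the derivative is nonneg on `[0,∞)`, then `f ≥ 0` there. -/
lemma nonneg_of_deriv_nonneg {f f' : ℝ → ℝ} (hd : ∀ x, HasDerivAt f (f' x) x)
    (h0 : f 0 = 0) (h' : ∀ x, 0 ≤ x → 0 ≤ f' x) : ∀ x, 0 ≤ x → 0 ≤ f x := by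
  intro x hx
  have hdiff : Differentiable ℝ f := fun y => (hd y).differentiableAt
  have hmono : MonotoneOn f (Ici (0:ℝ)) := by
    apply monotoneOn_of_deriv_nonneg (convex_Ici 0) hdiff.continuous.continuousOn
      hdiff.differentiableOn
    intro y hy
    rw [interior_Ici] at hy
    rw [(hd y).deriv]
    exact h' y (le_of_lt hy)
  have := hmono (self_mem_Ici) (mem_Ici.2 hx) hx
  rwa [h0] at this

lemma sin_ge_cubic : ∀ x : ℝ, 0 ≤ x → x - x^3/6 ≤ sin x := by
  have h := nonneg_of_deriv_nonneg (f := fun x => sin x - (x - x^3/6))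
    (f' := fun x => cos x - (1 - x^2/2)) ?_ (by simp) ?_
  · intro x hx; linarith [h x hx]
  · intro x
    have : HasDerivAt (fun x : ℝ => sin x - (x - x^3/6)) (cos x - (1 - 3*x^2/6)) x := by
      apply (Real.hasDerivAt_sin x).sub
      apply (hasDerivAt_id x).sub
      have : HasDerivAt (fun x : ℝ => x^3) (3*x^2) x := by
        simpa using hasDerivAt_pow 3 x
      simpa using this.div_const 6
    convert this using 1; ring
  · intro x _; linarith [Real.one_sub_sq_div_two_le_cos (x := x)]

lemma cos_le_quartic : ∀ x : ℝ, 0 ≤ x → cos x ≤ 1 - x^2/2 + x^4/24 := by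
  have h := nonneg_of_deriv_nonneg (f := fun x => 1 - x^2/2 + x^4/24 - cos x)
    (f' := fun x => -x + x^3/6 + sin x) ?_ (by simp) ?_
  · intro x hx; linarith [h x hx]
  · intro x
    have h3 : HasDerivAt (fun x : ℝ => x^4/24) (4*x^3/24) x := by
      simpa using (hasDerivAt_pow 4 x).div_const 24
    have : HasDerivAt (fun x : ℝ => 1 - x^2/2 + x^4/24 - cos x)
        (0 - 2*x/2 + 4*x^3/24 - (-sin x)) x := by
      apply HasDerivAt.sub _ (Real.hasDerivAt_cos x)
      apply HasDerivAt.add _ h3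
      apply (hasDerivAt_const x 1).sub
      simpa using (hasDerivAt_pow 2 x).div_const 2
    convert this using 1; ring
  · intro x hx; linarith [sin_ge_cubic x hx]

lemma sin_le_quintic : ∀ x : ℝ, 0 ≤ x → sin x ≤ x - x^3/6 + x^5/120 := by
  have h := nonneg_of_deriv_nonneg (f := fun x => x - x^3/6 + x^5/120 - sin x)
    (f' := fun x => 1 - x^2/2 + x^4/24 - cos x) ?_ (by simp) ?_
  · intro x hx; linarith [h x hx]
  · intro x
    have h5 : HasDerivAt (fun x : ℝ => x^5/120) (5*x^4/120) x := by
      simpa using (hasDerivAt_pow 5 x).div_const 120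
    have h3 : HasDerivAt (fun x : ℝ => x^3/6) (3*x^2/6) x := by
      simpa using (hasDerivAt_pow 3 x).div_const 6
    have : HasDerivAt (fun x : ℝ => x - x^3/6 + x^5/120 - sin x)
        (1 - 3*x^2/6 + 5*x^4/120 - cos x) x := by
      exact (((hasDerivAt_id x).sub h3).add h5).sub (Real.hasDerivAt_sin x)
    convert this using 1; ring
  · intro x hx; linarith [cos_le_quartic x hx]

lemma cos_ge_sextic : ∀ x : ℝ, 0 ≤ x → 1 - x^2/2 + x^4/24 - x^6/720 ≤ cos x := by
  have h := nonneg_of_deriv_nonneg (f := fun x => cos x - (1 - x^2/2 + x^4/24 - x^6/720))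
    (f' := fun x => -sin x - (-x + x^3/6 - x^5/120)) ?_ (by simp) ?_
  · intro x hx; linarith [h x hx]
  · intro x
    have h6 : HasDerivAt (fun x : ℝ => x^6/720) (6*x^5/720) x := by
      simpa using (hasDerivAt_pow 6 x).div_const 720
    have h4 : HasDerivAt (fun x : ℝ => x^4/24) (4*x^3/24) x := by
      simpa using (hasDerivAt_pow 4 x).div_const 24
    have h2 : HasDerivAt (fun x : ℝ => x^2/2) (2*x/2) x := by
      simpa using (hasDerivAt_pow 2 x).div_const 2
    have : HasDerivAt (fun x : ℝ => cos x - (1 - x^2/2 + x^4/24 - x^6/720))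
        (-sin x - (0 - 2*x/2 + 4*x^3/24 - 6*x^5/720)) x := by
      exact (Real.hasDerivAt_cos x).sub ((((hasDerivAt_const x 1).sub h2).add h4).sub h6)
    convert this using 1; ring
  · intro x hx; linarith [sin_le_quintic x hx]


lemma nonneg_of_deriv_nonneg_Icc {b : ℝ} (hb : 0 ≤ b) {f f' : ℝ → ℝ}
    (hd : ∀ x ∈ Icc (0:ℝ) b, HasDerivAt f (f' x) x)
    (h0 : 0 ≤ f 0) (h' : ∀ x ∈ Icc (0:ℝ) b, 0 ≤ f' x) :
    ∀ x ∈ Icc (0:ℝ) b, 0 ≤ f x := by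
  intro x hx
  have hmono : MonotoneOn f (Icc (0:ℝ) b) := by
    apply monotoneOn_of_deriv_nonneg (convex_Icc 0 b)
    · intro y hy; exact (hd y hy).differentiableAt.continuousAt.continuousWithinAt
    · intro y hy
      rw [interior_Icc] at hy
      exact ((hd y (Ioo_subset_Icc_self hy)).differentiableAt).differentiableWithinAt
    · intro y hy
      rw [interior_Icc] at hy
      rw [(hd y (Ioo_subset_Icc_self hy)).deriv]
      exact h' y (Ioo_subset_Icc_self hy)
  have := hmono (left_mem_Icc.2 hb) hx hx.1
  linarith

/-- Quadratic Bernoulli lower bound: for `1 ≤ q ≤ 2`, `s ∈ [0, 1/2]`,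
`(1-s)^q ≥ 1 - q*s + (q*(q-1)/2)*s^2`. -/
lemma quad_bernoulli {q : ℝ} (hq1 : 1 ≤ q) (hq2 : q ≤ 2) :
    ∀ s ∈ Icc (0:ℝ) (1/2), 1 - q*s + (q*(q-1)/2)*s^2 ≤ (1-s) ^ q := by
  have h := nonneg_of_deriv_nonneg_Icc (b := 1/2) (by norm_num)
    (f := fun s => (1-s) ^ q - (1 - q*s + (q*(q-1)/2)*s^2))
    (f' := fun s => -1 * q * (1-s)^(q-1) - (-q + q*(q-1)*s)) ?_ ?_ ?_
  · intro s hs; linarith [h s hs]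
  · intro s _
    apply HasDerivAt.sub
    · have hb : HasDerivAt (fun y : ℝ => 1 - y) (-1) s := by
        simpa using (hasDerivAt_id s).const_sub 1
      simpa using hb.rpow_const (Or.inr hq1)
    · have h2 : HasDerivAt (fun s : ℝ => (q*(q-1)/2)*s^2) ((q*(q-1)/2)*(2*s)) s := by
        exact ((hasDerivAt_pow 2 s).const_mul _).congr_deriv (by ring)
      have : HasDerivAt (fun s : ℝ => 1 - q*s + (q*(q-1)/2)*s^2)
          (0 - q*1 + (q*(q-1)/2)*(2*s)) s := by
        exact (((hasDerivAt_const s (1:ℝ)).sub ((hasDerivAt_id s).const_mul q)).add h2)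
      exact this.congr_deriv (by ring)
  · simp [Real.one_rpow]
  · intro s hs
    show 0 ≤ -1 * q * (1-s)^(q-1) - (-q + q*(q-1)*s)
    have hber : (1 + (-s)) ^ (q-1) ≤ 1 + (q-1) * (-s) := by
      apply rpow_one_add_le_one_add_mul_self (by linarith [hs.2]) (by linarith) (by linarith)
    have heq : (1:ℝ) + (-s) = 1 - s := by ring
    rw [heq] at hber
    nlinarith [hber, mul_le_mul_of_nonneg_left hber (by linarith : (0:ℝ) ≤ q)]

set_option maxHeartbeats 1000000 in
lemma Qpos {a q s : ℝ} (ha1 : 3.141592 < a) (ha2 : a < 3.141593)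
    (hql : 1.751937 < q) (hqu : q < 1.75194) (hs0 : 0 ≤ s) (hs2 : s ≤ 1/2) :
    0 < ((q+1)/2 - a^2/8) - ((q-1)/2)*s + (a^4/384)*s^2 - (a^6/46080)*s^4 := by
  have ha0 : 0 < a := by linarith
  have hpi2 : a^2 < 9.869607 := by nlinarith [mul_lt_mul_of_pos_left ha2 ha0]
  have hpi2' : 9.8696 < a^2 := by nlinarith [mul_lt_mul_of_pos_left ha1 ha0]
  have ha2pos : (0:ℝ) < a^2 := by positivity
  have hpi4 : 97.40 < a^4 := by nlinarith [sq_nonneg (a^2 - 9.8696), hpi2']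
  have hpi4' : a^4 < 97.41 := by nlinarith [mul_lt_mul_of_pos_left hpi2 ha2pos, hpi2]
  have hpi6 : a^6 < 961.4 := by nlinarith [mul_lt_mul_of_pos_right hpi4' ha2pos, hpi2, hpi4']
  have hb1 : 0.2536*s^2 ≤ (a^4/384)*s^2 :=
    mul_le_mul_of_nonneg_right (by linarith) (sq_nonneg s)
  have hs4nn : (0:ℝ) ≤ s^4 := by positivity
  have hb2 : (a^6/46080)*s^4 ≤ 0.020864*s^4 :=
    mul_le_mul_of_nonneg_right (by linarith) hs4nn
  have hs2sq : s^2 ≤ 1/4 := by nlinarith [mul_le_mul_of_nonneg_right hs2 hs0]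
  have hs4 : s^4 ≤ s^2/4 := by nlinarith [mul_le_mul_of_nonneg_left hs2sq (sq_nonneg s)]
  have hC3s : ((q-1)/2)*s ≤ 0.37597*s :=
    mul_le_mul_of_nonneg_right (by linarith) hs0
  have hprod : (0:ℝ) ≤ 0.125889 - 0.37597*s + 0.248384*s^2 := by
    nlinarith [mul_nonneg (by linarith : (0:ℝ) ≤ 1/2 - s)
      (by linarith : (0:ℝ) ≤ 0.251778 - 0.248384*s)]
  linarith [hprod, hb1, hb2, hs4, hC3s]

set_option maxHeartbeats 1000000 in
/-- The core inequality at the critical exponent. -/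
lemma core_ineq : ∀ t ∈ Ioo (0:ℝ) 1,
    π/2*t - (π-2)/2 * t ^ (2/(π-2)+1) < sin (π*t/2) := by
  have hπ1 : 3.141592 < π := pi_gt_d6
  have hπ2 : π < 3.141593 := pi_lt_d6
  set q : ℝ := 2/(π-2) with hqdef
  have hπ2pos : (0:ℝ) < π - 2 := by linarith
  have hq_eq : (π-2) * q = 2 := by rw [hqdef]; field_simp
  have hql : 1.751937 < q := by rw [hqdef]; rw [lt_div_iff₀ hπ2pos]; nlinarith
  have hqu : q < 1.75194 := by rw [hqdef]; rw [div_lt_iff₀ hπ2pos]; nlinarith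
  intro t ht
  obtain ⟨ht0, ht1⟩ := ht
  rcases le_or_gt t (1/2) with hA | hB
  · -- Region A : 0 < t ≤ 1/2
    have hx0 : 0 ≤ π*t/2 := by positivity
    have hsin : π*t/2 - (π*t/2)^3/6 ≤ sin (π*t/2) := sin_ge_cubic _ hx0
    -- t ^ (2 - q) ≤ 169/200
    have h1 : t ^ ((2:ℝ)-q) ≤ (1/2:ℝ) ^ ((2:ℝ)-q) :=
      Real.rpow_le_rpow ht0.le hA (by linarith)
    have h2 : (1/2:ℝ) ^ ((2:ℝ)-q) ≤ (1/2:ℝ) ^ ((31:ℝ)/125) :=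
      Real.rpow_le_rpow_of_exponent_ge (by norm_num) (by norm_num) (by linarith)
    have h3 : (1/2:ℝ) ^ ((31:ℝ)/125) ≤ 169/200 := by
      have hkey : ((1/2:ℝ) ^ ((31:ℝ)/125)) ^ (125:ℕ) ≤ ((169:ℝ)/200) ^ (125:ℕ) := by
        rw [← Real.rpow_natCast ((1/2:ℝ) ^ ((31:ℝ)/125)) 125, ← Real.rpow_mul (by norm_num)]
        have : (31:ℝ)/125 * (125:ℕ) = ((31:ℕ):ℝ) := by norm_num
        rw [this, Real.rpow_natCast]
        norm_num
      exact le_of_pow_le_pow_left₀ (by norm_num) (by norm_num) hkey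
    have htq : t ^ ((2:ℝ)-q) ≤ 169/200 := le_trans h1 (le_trans h2 h3)
    have htqpos : 0 < t ^ ((2:ℝ)-q) := Real.rpow_pos_of_pos ht0 _
    have hinv : (200:ℝ)/169 ≤ (t ^ ((2:ℝ)-q))⁻¹ := by
      have hmul : t ^ ((2:ℝ)-q) * (t ^ ((2:ℝ)-q))⁻¹ = 1 := mul_inv_cancel₀ htqpos.ne'
      have hbpos : 0 < (t ^ ((2:ℝ)-q))⁻¹ := inv_pos.2 htqpos
      nlinarith [mul_nonneg hbpos.le (sub_nonneg.2 htq)]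
    have h4 : t ^ (q+1) = t^3 * (t ^ ((2:ℝ)-q))⁻¹ := by
      rw [← Real.rpow_neg ht0.le, ← Real.rpow_natCast t 3, ← Real.rpow_add ht0]
      congr 1
      push_cast
      ring
    have h5 : (π-2)/2 * (200/169) * t^3 ≤ (π-2)/2 * t ^ (q+1) := by
      rw [h4]
      have ht3 : (0:ℝ) < t^3 := by positivity
      have := mul_le_mul_of_nonneg_left hinv (by positivity : (0:ℝ) ≤ (π-2)/2 * t^3)
      nlinarith [this]
    have hnum : (π*t/2)^3/6 < (π-2)/2 * (200/169) * t^3 := by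
      have ht3 : (0:ℝ) < t^3 := by positivity
      have hsq : π^2 < 9.869607 := by
        nlinarith [mul_lt_mul_of_pos_left hπ2 pi_pos, hπ2, pi_pos]
      have hcube : π^3 < 31.0063 := by
        nlinarith [mul_lt_mul_of_pos_left hsq pi_pos, hsq, hπ2, pi_pos]
      have hc : π^3/48 < (π-2)/2 * (200/169) := by linarith
      calc (π*t/2)^3/6 = π^3/48 * t^3 := by ring
        _ < (π-2)/2 * (200/169) * t^3 := mul_lt_mul_of_pos_right hc ht3
    linarith
  · -- Region B : 1/2 < t < 1
    set s : ℝ := 1 - t with hsdef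
    have hs0 : 0 < s := by rw [hsdef]; linarith
    have hs2 : s < 1/2 := by rw [hsdef]; linarith
    have htval : t = 1 - s := by rw [hsdef]; ring
    have hsin_eq : sin (π*t/2) = cos (π*s/2) := by
      have : π*t/2 = π/2 - π*s/2 := by rw [htval]; ring
      rw [this, Real.sin_pi_div_two_sub]
    have hy0 : 0 ≤ π*s/2 := by positivity
    have hcos : 1 - (π*s/2)^2/2 + (π*s/2)^4/24 - (π*s/2)^6/720 ≤ cos (π*s/2) :=
      cos_ge_sextic _ hy0
    have hqb : 1 - q*s + (q*(q-1)/2)*s^2 ≤ (1-s) ^ q :=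
      quad_bernoulli (by linarith) (by linarith) s ⟨hs0.le, hs2.le⟩
    have ht_eq : t ^ (q+1) = (1-s) * (1-s) ^ q := by
      rw [htval, Real.rpow_add (by linarith : (0:ℝ) < 1-s), Real.rpow_one, mul_comm]
    have hmul : (1-s) * (1 - q*s + (q*(q-1)/2)*s^2) ≤ (1-s) * (1-s) ^ q :=
      mul_le_mul_of_nonneg_left hqb (by linarith)
    have hlhs : (π-2)/2 * ((1-s) * (1 - q*s + (q*(q-1)/2)*s^2)) ≤ (π-2)/2 * t ^ (q+1) := by
      rw [ht_eq]
      exact mul_le_mul_of_nonneg_left hmul (by linarith)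
    -- the polynomial inequality
    have hfact : (1 - (π*s/2)^2/2 + (π*s/2)^4/24 - (π*s/2)^6/720)
        - (π/2*(1-s) - (π-2)/2 * ((1-s) * (1 - q*s + (q*(q-1)/2)*s^2)))
        = s^2 * (((q+1)/2 - π^2/8) - ((q-1)/2)*s + (π^4/384)*s^2 - (π^6/46080)*s^4) := by
      linear_combination (-(s/2) + (q+1)*s^2/4 - (q-1)*s^3/4) * hq_eq
    have hQ : 0 < ((q+1)/2 - π^2/8) - ((q-1)/2)*s + (π^4/384)*s^2 - (π^6/46080)*s^4 :=
      Qpos hπ1 hπ2 hql hqu hs0.le hs2.le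
    have hEpos : 0 < (1 - (π*s/2)^2/2 + (π*s/2)^4/24 - (π*s/2)^6/720)
        - (π/2*(1-s) - (π-2)/2 * ((1-s) * (1 - q*s + (q*(q-1)/2)*s^2))) := by
      rw [hfact]
      exact mul_pos (pow_pos hs0 2) hQ
    have htv : π/2*t = π/2*(1-s) := by rw [htval]
    rw [hsin_eq]
    linarith

lemma rhs_eq {x : ℝ} (hx : 0 < x) (q : ℝ) :
    2/π + (π - 2)/π ^ (q+1) * (π ^ q - (2*x) ^ q)
      = 1 - (π-2)/π * (2*x/π) ^ q := by
  have hπq : (0:ℝ) < π ^ q := Real.rpow_pos_of_pos pi_pos q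
  rw [Real.div_rpow (by positivity) pi_pos.le, Real.rpow_add pi_pos q 1, Real.rpow_one]
  field_simp
  ring

theorem lower_bound_A :
    (∀ q ∈ Set.Ioc (0:ℝ) (2/(π-2)), ∀ x ∈ Set.Ioo 0 (π/2),
      Real.sin x / x > 2/π + (π - 2)/π ^ (q+1) * (π ^ q - (2*x) ^ q)) ∧
    (∀ q > 2/(π-2), ∃ x ∈ Set.Ioo 0 (π/2),
      ¬ (Real.sin x / x > 2/π + (π - 2)/π ^ (q+1) * (π ^ q - (2*x) ^ q))) := by
  have hπ1 : 3.141592 < π := pi_gt_d6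
  have hπ2pos : (0:ℝ) < π - 2 := by linarith
  have hc : (0:ℝ) < (π-2)/π := by positivity
  constructor
  · -- Part 1
    intro q hq x hx
    obtain ⟨hq0, hqle⟩ := hq
    obtain ⟨hx0, hx2⟩ := hx
    set b : ℝ := 2*x/π with hbdef
    have hb0 : 0 < b := by rw [hbdef]; positivity
    have hb1 : b < 1 := by
      rw [hbdef, div_lt_one pi_pos]; linarith
    have hcore := core_ineq b ⟨hb0, hb1⟩
    have hxb : π*b/2 = x := by rw [hbdef]; field_simp
    rw [hxb] at hcore
    have hsplit : b ^ (2/(π-2)+1) = b ^ (2/(π-2)) * b := by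
      rw [Real.rpow_add hb0, Real.rpow_one]
    rw [hsplit] at hcore
    -- sin x > x * (1 - (π-2)/π * b ^ q₁)
    have hxval : x = π*b/2 := hxb.symm
    have hineq : x * (1 - (π-2)/π * b ^ (2/(π-2))) < sin x := by
      have : x * (1 - (π-2)/π * b ^ (2/(π-2))) = π/2*b - (π-2)/2 * (b ^ (2/(π-2)) * b) := by
        rw [hxval]; field_simp
      rw [this]; exact hcore
    have hdiv : 1 - (π-2)/π * b ^ (2/(π-2)) < sin x / x := by
      rw [lt_div_iff₀ hx0]; linarith [hineq]
    have hmono : b ^ (2/(π-2)) ≤ b ^ q :=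
      Real.rpow_le_rpow_of_exponent_ge hb0 hb1.le hqle
    have hfin : 1 - (π-2)/π * b ^ q ≤ 1 - (π-2)/π * b ^ (2/(π-2)) := by
      have := mul_le_mul_of_nonneg_left hmono hc.le
      linarith
    rw [gt_iff_lt, rhs_eq hx0 q]
    calc 1 - (π-2)/π * (2*x/π) ^ q ≤ 1 - (π-2)/π * b ^ (2/(π-2)) := hfin
      _ < sin x / x := hdiv
  · -- Part 2 : sharpness
    intro q hq
    set F : ℝ → ℝ := fun y => sin y / y - (2/π + (π - 2)/π ^ (q+1) * (π ^ q - (2*y) ^ q))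
      with hFdef
    have hπ2ne : (π/2 : ℝ) ≠ 0 := ne_of_gt pi_div_two_pos
    have h2π : 2*(π/2) = π := by ring
    have hπne : π ≠ 0 := pi_ne_zero
    -- derivative of sin y / y at π/2
    have hA : HasDerivAt (fun y : ℝ => sin y / y)
        ((cos (π/2) * (π/2) - sin (π/2) * 1)/(π/2)^2) (π/2) :=
      (Real.hasDerivAt_sin _).div (hasDerivAt_id _) hπ2ne
    have hB : HasDerivAt (fun y : ℝ => (2*y) ^ q) (2 * q * π ^ (q-1)) (π/2) := by
      have hi : HasDerivAt (fun y : ℝ => 2*y) 2 (π/2) := by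
        simpa using (hasDerivAt_id (π/2)).const_mul (2:ℝ)
      have := hi.rpow_const (p := q) (Or.inl (by rw [h2π]; exact hπne))
      rw [h2π] at this
      exact this
    have hC : HasDerivAt F
        ((cos (π/2) * (π/2) - sin (π/2) * 1)/(π/2)^2
          - (π - 2)/π ^ (q+1) * (0 - 2 * q * π ^ (q-1))) (π/2) := by
      apply hA.sub
      apply HasDerivAt.const_add
      exact ((hasDerivAt_const (π/2) (π ^ q)).sub hB).const_mul _
    -- the derivative is positive
    set d : ℝ := (cos (π/2) * (π/2) - sin (π/2) * 1)/(π/2)^2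
          - (π - 2)/π ^ (q+1) * (0 - 2 * q * π ^ (q-1)) with hddef
    have hd : 0 < d := by
      have hq2 : 2 < q * (π-2) := by
        rw [gt_iff_lt, div_lt_iff₀ hπ2pos] at hq; linarith
      have hπqpos : (0:ℝ) < π ^ q := Real.rpow_pos_of_pos pi_pos q
      have e1 : π ^ (q+1) = π ^ q * π := by rw [Real.rpow_add pi_pos, Real.rpow_one]
      have e2 : π ^ (q-1) = π ^ q / π := by
        rw [Real.rpow_sub pi_pos, Real.rpow_one]
      rw [hddef, e1, e2, Real.cos_pi_div_two, Real.sin_pi_div_two]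
      have hd_eq : (0 * (π/2) - 1 * 1)/(π/2)^2
          - (π - 2)/(π ^ q * π) * (0 - 2 * q * (π ^ q / π))
          = (2 * (q * (π-2)) - 4)/π^2 := by
        field_simp
        ring
      rw [hd_eq]
      apply div_pos (by linarith) (by positivity)
    have hF0 : F (π/2) = 0 := by
      rw [hFdef]
      simp only [Real.sin_pi_div_two, h2π]
      field_simp
      ring
    -- slope tends to d > 0
    have hslope : Filter.Tendsto (slope F (π/2)) (nhdsWithin (π/2) (Iio (π/2))) (nhds d) := by
      have h1 := hasDerivAt_iff_tendsto_slope.mp hC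
      apply h1.mono_left
      apply nhdsWithin_mono
      intro y hy
      simp only [mem_compl_iff, mem_singleton_iff]
      exact ne_of_lt hy
    have hev1 : ∀ᶠ z in nhdsWithin (π/2) (Iio (π/2)), 0 < slope F (π/2) z :=
      hslope.eventually (eventually_gt_nhds hd)
    have hev2 : ∀ᶠ z in nhdsWithin (π/2) (Iio (π/2)), z ∈ Ioo 0 (π/2) :=
      Filter.eventually_of_mem (Ioo_mem_nhdsLT_of_mem ⟨pi_div_two_pos, le_refl _⟩)
        (fun z hz => hz)
    obtain ⟨z, hz0, hzmem⟩ := (hev1.and hev2).exists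
    refine ⟨z, hzmem, ?_⟩
    rw [not_lt]
    rw [slope_def_field, hF0, sub_zero] at hz0
    have hzlt : z - π/2 < 0 := by linarith [hzmem.2]
    have hFz : F z < 0 := by
      rcases div_pos_iff.mp hz0 with ⟨h1, h2⟩ | ⟨h1, h2⟩
      · linarith
      · exact h1
    have heq : F z = sin z / z - (2/π + (π - 2)/π ^ (q+1) * (π ^ q - (2*z) ^ q)) := rfl
    rw [heq] at hFz
    linarith
end
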